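/- Let K be a function assigning a natural number to every triple of partitions that is invariant under conjugating any two of its three arguments, i.e. K(λ,μ,ν) = K(λ',μ',ν) = K(λ',μ,ν') = K(λ,μ',ν') for all partitions λ, μ, ν of the same weight. Let λ, μ, ν be nonempty partitions of the same weight, let d₁, d₂, d₃, d be integers, and suppose that for every (a,b,c,m) ∈ Dom(d₁,d₂,d₃,d), writing A = λ⊕(m−a,a), B = μ⊕(m−b,b), C = ν⊕(m−c,c), each of the four triples (A,B,C), (A',B',C), (A',B,C'), (A,B',C') is K-stable, meaning K(T₁,T₂,T₃) = K(T₁⊕(1,0), T₂⊕(1,0), T₃⊕(1,0)). Then for all (a,b,c,m) and (a',b',c',m') in Dom(d₁,d₂,d₃,d) with a+b+c ≡ a'+b'+c' (mod 2), one has K(λ⊕(m−a,a), μ⊕(m−b,b), ν⊕(m−c,c)) = K(λ⊕(m'−a',a'), μ⊕(m'−b',b'), ν⊕(m'−c',c')). In other words, K takes at most two values on the triples indexed by Dom(d₁,d₂,d₃,d), one for each parity of a+b+c. -/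

import Mathlib

/-- A list of naturals is a partition if it is weakly decreasing and all parts are positive. -/
def IsPartition (l : List ℕ) : Prop :=
  l.Pairwise (· ≥ ·) ∧ ∀ x ∈ l, 0 < x

/-- `opPQ l p q` is the partition `l ⊕ (p, q)`: add `p` to the first part and
append `q` parts equal to `1`. -/
def opPQ (l : List ℕ) (p q : ℕ) : List ℕ :=
  (l.headD 0 + p) :: (l.tail ++ List.replicate q 1)

/-- The conjugate (transpose) partition: its `i`-th part (for `0 ≤ i < max part`)
is the number of parts of `l` that are greater than `i`. -/
def conjP (l : List ℕ) : List ℕ :=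
  (List.range (l.foldr max 0)).map (fun i => (l.filter (fun x => decide (i < x))).length)

/-- `Dom d₁ d₂ d₃ d` is the set of quadruples `(a,b,c,m)` of natural numbers with
`-a + b + c ≥ d₁`, `a - b + c ≥ d₂`, `a + b - c ≥ d₃`, `2m - (a + b + c) ≥ 2d`
(read in `ℤ`), and `m ≥ a`, `m ≥ b`, `m ≥ c`. -/
def Dom (d₁ d₂ d₃ d : ℤ) : Set (ℕ × ℕ × ℕ × ℕ) :=
  {x | d₁ ≤ -(x.1 : ℤ) + x.2.1 + x.2.2.1 ∧
       d₂ ≤ (x.1 : ℤ) - x.2.1 + x.2.2.1 ∧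
       d₃ ≤ (x.1 : ℤ) + x.2.1 - x.2.2.1 ∧
       2 * d ≤ 2 * (x.2.2.2 : ℤ) - ((x.1 : ℤ) + x.2.1 + x.2.2.1) ∧
       x.1 ≤ x.2.2.2 ∧ x.2.1 ≤ x.2.2.2 ∧ x.2.2.1 ≤ x.2.2.2}

/-- A triple `(T₁, T₂, T₃)` is `K`-stable if `K` does not change when one adds one box to
the first row of each of the three partitions. -/
def KStable (K : List ℕ → List ℕ → List ℕ → ℕ) (T₁ T₂ T₃ : List ℕ) : Prop :=
  K T₁ T₂ T₃ = K (opPQ T₁ 1 0) (opPQ T₂ 1 0) (opPQ T₃ 1 0)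

lemma opPQ_row (l : List ℕ) (p q : ℕ) : opPQ (opPQ l p q) 1 0 = opPQ l (p+1) q := by
  simp [opPQ, Nat.add_assoc]

lemma opPQ_col (l : List ℕ) (p q : ℕ) : opPQ (opPQ l p q) 0 1 = opPQ l p (q+1) := by
  simp [opPQ, List.replicate_succ']

lemma opPQ_ne (l : List ℕ) (p q : ℕ) : opPQ l p q ≠ [] := by simp [opPQ]

lemma sum_opPQ (l : List ℕ) (hne : l ≠ []) (p q : ℕ) :
    (opPQ l p q).sum = l.sum + p + q := by
  obtain ⟨h, t, rfl⟩ := List.exists_cons_of_ne_nil hne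
  simp [opPQ, List.sum_replicate]
  omega

lemma isPartition_opPQ (l : List ℕ) (hl : IsPartition l) (hne : l ≠ []) (p q : ℕ) :
    IsPartition (opPQ l p q) := by
  obtain ⟨h, t, rfl⟩ := List.exists_cons_of_ne_nil hne
  obtain ⟨hs, hpos⟩ := hl
  rw [List.pairwise_cons] at hs
  have hh : 0 < h := hpos h (by simp)
  constructor
  · rw [opPQ, List.pairwise_cons]
    simp only [List.headD_cons, List.tail_cons]
    constructor
    · intro b hb
      rcases List.mem_append.1 hb with hb | hb
      · exact le_trans (hs.1 b hb) (Nat.le_add_right _ _)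
      · have := List.eq_of_mem_replicate hb
        omega
    · rw [List.pairwise_append]
      refine ⟨hs.2, List.pairwise_replicate.2 (by simp), ?_⟩
      intro a ha b hb
      have := List.eq_of_mem_replicate hb
      subst this
      exact hpos a (by simp [ha])
  · intro x hx
    simp only [opPQ, List.headD_cons, List.tail_cons, List.mem_cons, List.mem_append] at hx
    rcases hx with rfl | hx | hx
    · omega
    · exact hpos x (by simp [hx])
    · have := List.eq_of_mem_replicate hx; omega

lemma foldr_max_eq (l : List ℕ) (b : ℕ) : l.foldr max b = max (l.foldr max 0) b := by
  induction l with
  | nil => simp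
  | cons h t ih => simp [ih, Nat.max_assoc]

lemma conj_col (A : List ℕ) (hA : IsPartition A) (hne : A ≠ []) :
    conjP (opPQ A 0 1) = opPQ (conjP A) 1 0 := by
  obtain ⟨h, t, rfl⟩ := List.exists_cons_of_ne_nil hne
  have hh : 0 < h := hA.2 h (by simp)
  have hApp : opPQ (h::t) 0 1 = (h::t) ++ [1] := by simp [opPQ]
  rw [hApp]
  have hM1 : 1 ≤ (h::t).foldr max 0 := by
    simp only [List.foldr_cons]
    omega
  have hM : ((h::t) ++ [1]).foldr max 0 = (h::t).foldr max 0 := by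
    rw [List.foldr_append]
    simp only [List.foldr_cons, List.foldr_nil]
    rw [show (1 ⊔ 0) = 1 from rfl, foldr_max_eq t 1, foldr_max_eq t 0]
    omega
  obtain ⟨M', hM'⟩ : ∃ M', (h::t).foldr max 0 = M' + 1 :=
    ⟨_, (Nat.succ_pred_eq_of_pos hM1).symm⟩
  unfold conjP
  rw [hM, hM', List.range_succ_eq_map]
  simp only [List.map_cons, List.map_map, opPQ, List.headD_cons, List.tail_cons,
    List.replicate_zero, List.append_nil, List.filter_append]
  congr 1
  · simp
  · apply List.map_congr_left
    intro i _
    simp [Function.comp]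

/-- If `K` is invariant under conjugating any two of its arguments, and for every
`(a,b,c,m) ∈ Dom d₁ d₂ d₃ d` the four triples `(A,B,C)`, `(A',B',C)`, `(A',B,C')`,
`(A,B',C')` with `A = λ⊕(m-a,a)`, `B = μ⊕(m-b,b)`, `C = ν⊕(m-c,c)` are `K`-stable, then
`K(λ⊕(m-a,a), μ⊕(m-b,b), ν⊕(m-c,c))` takes at most two values on `Dom d₁ d₂ d₃ d`, one
for each parity of `a + b + c`. -/
theorem at_most_two_values_on_Dom (K : List ℕ → List ℕ → List ℕ → ℕ)
    (hconj : ∀ l m n : List ℕ, IsPartition l → IsPartition m → IsPartition n →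
      l.sum = m.sum → m.sum = n.sum →
      K l m n = K (conjP l) (conjP m) n ∧
      K l m n = K (conjP l) m (conjP n) ∧
      K l m n = K l (conjP m) (conjP n))
    (l m n : List ℕ)
    (hl : IsPartition l) (hm : IsPartition m) (hn : IsPartition n)
    (hlne : l ≠ []) (hmne : m ≠ []) (hnne : n ≠ [])
    (hw₁ : l.sum = m.sum) (hw₂ : m.sum = n.sum)
    (d₁ d₂ d₃ d : ℤ)
    (hstab : ∀ x ∈ Dom d₁ d₂ d₃ d,
      KStable K (opPQ l (x.2.2.2 - x.1) x.1) (opPQ m (x.2.2.2 - x.2.1) x.2.1)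
        (opPQ n (x.2.2.2 - x.2.2.1) x.2.2.1) ∧
      KStable K (conjP (opPQ l (x.2.2.2 - x.1) x.1)) (conjP (opPQ m (x.2.2.2 - x.2.1) x.2.1))
        (opPQ n (x.2.2.2 - x.2.2.1) x.2.2.1) ∧
      KStable K (conjP (opPQ l (x.2.2.2 - x.1) x.1)) (opPQ m (x.2.2.2 - x.2.1) x.2.1)
        (conjP (opPQ n (x.2.2.2 - x.2.2.1) x.2.2.1)) ∧
      KStable K (opPQ l (x.2.2.2 - x.1) x.1) (conjP (opPQ m (x.2.2.2 - x.2.1) x.2.1))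
        (conjP (opPQ n (x.2.2.2 - x.2.2.1) x.2.2.1)))
    (x y : ℕ × ℕ × ℕ × ℕ) (hx : x ∈ Dom d₁ d₂ d₃ d) (hy : y ∈ Dom d₁ d₂ d₃ d)
    (hpar : (x.1 + x.2.1 + x.2.2.1) % 2 = (y.1 + y.2.1 + y.2.2.1) % 2) :
    K (opPQ l (x.2.2.2 - x.1) x.1) (opPQ m (x.2.2.2 - x.2.1) x.2.1)
        (opPQ n (x.2.2.2 - x.2.2.1) x.2.2.1) =
      K (opPQ l (y.2.2.2 - y.1) y.1) (opPQ m (y.2.2.2 - y.2.1) y.2.1)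
        (opPQ n (y.2.2.2 - y.2.2.1) y.2.2.1) := by
  classical
  -- abbreviation for the function under study
  let f : ℕ × ℕ × ℕ × ℕ → ℕ := fun z =>
    K (opPQ l (z.2.2.2 - z.1) z.1) (opPQ m (z.2.2.2 - z.2.1) z.2.1)
      (opPQ n (z.2.2.2 - z.2.2.1) z.2.2.1)
  -- single step in m
  have stepM : ∀ a b c mm : ℕ, (a, b, c, mm) ∈ Dom d₁ d₂ d₃ d →
      f (a, b, c, mm) = f (a, b, c, mm + 1) ∧ (a, b, c, mm + 1) ∈ Dom d₁ d₂ d₃ d := by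
    intro a b c mm hmem
    have habc : a ≤ mm ∧ b ≤ mm ∧ c ≤ mm := by
      simp only [Dom, Set.mem_setOf_eq] at hmem
      exact ⟨hmem.2.2.2.2.1, hmem.2.2.2.2.2⟩
    have hst := (hstab (a, b, c, mm) hmem).1
    rw [KStable] at hst
    constructor
    · show K _ _ _ = K _ _ _
      rw [hst, opPQ_row, opPQ_row, opPQ_row]
      have e1 : mm - a + 1 = mm + 1 - a := by omega
      have e2 : mm - b + 1 = mm + 1 - b := by omega
      have e3 : mm - c + 1 = mm + 1 - c := by omega
      rw [e1, e2, e3]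
    · simp only [Dom, Set.mem_setOf_eq] at hmem ⊢
      push_cast at hmem ⊢
      omega
  -- generic diagonal step helper hypotheses
  have sumA : ∀ (a mm q : ℕ), a ≤ mm → (opPQ l (mm - a) q).sum = l.sum + (mm - a) + q :=
    fun a mm q _ => sum_opPQ l hlne _ _
  -- step adding to a and b
  have step12 : ∀ a b c mm : ℕ, (a, b, c, mm) ∈ Dom d₁ d₂ d₃ d →
      f (a, b, c, mm) = f (a + 1, b + 1, c, mm + 1) ∧
        (a + 1, b + 1, c, mm + 1) ∈ Dom d₁ d₂ d₃ d := by
    intro a b c mm hmem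
    have habc : a ≤ mm ∧ b ≤ mm ∧ c ≤ mm := by
      simp only [Dom, Set.mem_setOf_eq] at hmem
      exact ⟨hmem.2.2.2.2.1, hmem.2.2.2.2.2⟩
    set A := opPQ l (mm - a) a with hAdef
    set B := opPQ m (mm - b) b with hBdef
    set C := opPQ n (mm - c) c with hCdef
    have hA : IsPartition A := isPartition_opPQ l hl hlne _ _
    have hB : IsPartition B := isPartition_opPQ m hm hmne _ _
    have hC : IsPartition C := isPartition_opPQ n hn hnne _ _
    have sA : A.sum = l.sum + mm := by rw [hAdef, sum_opPQ l hlne]; omega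
    have sB : B.sum = m.sum + mm := by rw [hBdef, sum_opPQ m hmne]; omega
    have sC : C.sum = n.sum + mm := by rw [hCdef, sum_opPQ n hnne]; omega
    have h1 := (hconj A B C hA hB hC (by omega) (by omega)).1
    have h2 := (hstab (a, b, c, mm) hmem).2.1
    rw [KStable] at h2
    have eA : opPQ (conjP A) 1 0 = conjP (opPQ l (mm - a) (a + 1)) := by
      rw [← conj_col A hA (opPQ_ne _ _ _), hAdef, opPQ_col]
    have eB : opPQ (conjP B) 1 0 = conjP (opPQ m (mm - b) (b + 1)) := by
      rw [← conj_col B hB (opPQ_ne _ _ _), hBdef, opPQ_col]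
    have eC : opPQ C 1 0 = opPQ n (mm - c + 1) c := by rw [hCdef, opPQ_row]
    have hA' : IsPartition (opPQ l (mm - a) (a + 1)) := isPartition_opPQ l hl hlne _ _
    have hB' : IsPartition (opPQ m (mm - b) (b + 1)) := isPartition_opPQ m hm hmne _ _
    have hC' : IsPartition (opPQ n (mm - c + 1) c) := isPartition_opPQ n hn hnne _ _
    have sA' : (opPQ l (mm - a) (a + 1)).sum = l.sum + mm + 1 := by
      rw [sum_opPQ l hlne]; omega
    have sB' : (opPQ m (mm - b) (b + 1)).sum = m.sum + mm + 1 := by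
      rw [sum_opPQ m hmne]; omega
    have sC' : (opPQ n (mm - c + 1) c).sum = n.sum + mm + 1 := by
      rw [sum_opPQ n hnne]; omega
    have h3 := (hconj (opPQ l (mm - a) (a + 1)) (opPQ m (mm - b) (b + 1))
      (opPQ n (mm - c + 1) c) hA' hB' hC' (by omega) (by omega)).1
    constructor
    · show K A B C = K (opPQ l (mm + 1 - (a + 1)) (a + 1)) (opPQ m (mm + 1 - (b + 1)) (b + 1))
        (opPQ n (mm + 1 - c) c)
      have e1 : mm + 1 - (a + 1) = mm - a := by omega
      have e2 : mm + 1 - (b + 1) = mm - b := by omega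
      have e3 : mm + 1 - c = mm - c + 1 := by omega
      rw [e1, e2, e3, h1, h2, eA, eB, eC, ← h3]
    · simp only [Dom, Set.mem_setOf_eq] at hmem ⊢
      push_cast at hmem ⊢
      omega
  -- step adding to a and c
  have step13 : ∀ a b c mm : ℕ, (a, b, c, mm) ∈ Dom d₁ d₂ d₃ d →
      f (a, b, c, mm) = f (a + 1, b, c + 1, mm + 1) ∧
        (a + 1, b, c + 1, mm + 1) ∈ Dom d₁ d₂ d₃ d := by
    intro a b c mm hmem
    have habc : a ≤ mm ∧ b ≤ mm ∧ c ≤ mm := by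
      simp only [Dom, Set.mem_setOf_eq] at hmem
      exact ⟨hmem.2.2.2.2.1, hmem.2.2.2.2.2⟩
    set A := opPQ l (mm - a) a with hAdef
    set B := opPQ m (mm - b) b with hBdef
    set C := opPQ n (mm - c) c with hCdef
    have hA : IsPartition A := isPartition_opPQ l hl hlne _ _
    have hB : IsPartition B := isPartition_opPQ m hm hmne _ _
    have hC : IsPartition C := isPartition_opPQ n hn hnne _ _
    have sA : A.sum = l.sum + mm := by rw [hAdef, sum_opPQ l hlne]; omega
    have sB : B.sum = m.sum + mm := by rw [hBdef, sum_opPQ m hmne]; omega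
    have sC : C.sum = n.sum + mm := by rw [hCdef, sum_opPQ n hnne]; omega
    have h1 := (hconj A B C hA hB hC (by omega) (by omega)).2.1
    have h2 := (hstab (a, b, c, mm) hmem).2.2.1
    rw [KStable] at h2
    have eA : opPQ (conjP A) 1 0 = conjP (opPQ l (mm - a) (a + 1)) := by
      rw [← conj_col A hA (opPQ_ne _ _ _), hAdef, opPQ_col]
    have eC : opPQ (conjP C) 1 0 = conjP (opPQ n (mm - c) (c + 1)) := by
      rw [← conj_col C hC (opPQ_ne _ _ _), hCdef, opPQ_col]
    have eB : opPQ B 1 0 = opPQ m (mm - b + 1) b := by rw [hBdef, opPQ_row]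
    have hA' : IsPartition (opPQ l (mm - a) (a + 1)) := isPartition_opPQ l hl hlne _ _
    have hB' : IsPartition (opPQ m (mm - b + 1) b) := isPartition_opPQ m hm hmne _ _
    have hC' : IsPartition (opPQ n (mm - c) (c + 1)) := isPartition_opPQ n hn hnne _ _
    have sA' : (opPQ l (mm - a) (a + 1)).sum = l.sum + mm + 1 := by
      rw [sum_opPQ l hlne]; omega
    have sB' : (opPQ m (mm - b + 1) b).sum = m.sum + mm + 1 := by
      rw [sum_opPQ m hmne]; omega
    have sC' : (opPQ n (mm - c) (c + 1)).sum = n.sum + mm + 1 := by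
      rw [sum_opPQ n hnne]; omega
    have h3 := (hconj (opPQ l (mm - a) (a + 1)) (opPQ m (mm - b + 1) b)
      (opPQ n (mm - c) (c + 1)) hA' hB' hC' (by omega) (by omega)).2.1
    constructor
    · show K A B C = K (opPQ l (mm + 1 - (a + 1)) (a + 1)) (opPQ m (mm + 1 - b) b)
        (opPQ n (mm + 1 - (c + 1)) (c + 1))
      have e1 : mm + 1 - (a + 1) = mm - a := by omega
      have e2 : mm + 1 - b = mm - b + 1 := by omega
      have e3 : mm + 1 - (c + 1) = mm - c := by omega
      rw [e1, e2, e3, h1, h2, eA, eB, eC, ← h3]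
    · simp only [Dom, Set.mem_setOf_eq] at hmem ⊢
      push_cast at hmem ⊢
      omega
  -- step adding to b and c
  have step23 : ∀ a b c mm : ℕ, (a, b, c, mm) ∈ Dom d₁ d₂ d₃ d →
      f (a, b, c, mm) = f (a, b + 1, c + 1, mm + 1) ∧
        (a, b + 1, c + 1, mm + 1) ∈ Dom d₁ d₂ d₃ d := by
    intro a b c mm hmem
    have habc : a ≤ mm ∧ b ≤ mm ∧ c ≤ mm := by
      simp only [Dom, Set.mem_setOf_eq] at hmem
      exact ⟨hmem.2.2.2.2.1, hmem.2.2.2.2.2⟩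
    set A := opPQ l (mm - a) a with hAdef
    set B := opPQ m (mm - b) b with hBdef
    set C := opPQ n (mm - c) c with hCdef
    have hA : IsPartition A := isPartition_opPQ l hl hlne _ _
    have hB : IsPartition B := isPartition_opPQ m hm hmne _ _
    have hC : IsPartition C := isPartition_opPQ n hn hnne _ _
    have sA : A.sum = l.sum + mm := by rw [hAdef, sum_opPQ l hlne]; omega
    have sB : B.sum = m.sum + mm := by rw [hBdef, sum_opPQ m hmne]; omega
    have sC : C.sum = n.sum + mm := by rw [hCdef, sum_opPQ n hnne]; omega
    have h1 := (hconj A B C hA hB hC (by omega) (by omega)).2.2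
    have h2 := (hstab (a, b, c, mm) hmem).2.2.2
    rw [KStable] at h2
    have eB : opPQ (conjP B) 1 0 = conjP (opPQ m (mm - b) (b + 1)) := by
      rw [← conj_col B hB (opPQ_ne _ _ _), hBdef, opPQ_col]
    have eC : opPQ (conjP C) 1 0 = conjP (opPQ n (mm - c) (c + 1)) := by
      rw [← conj_col C hC (opPQ_ne _ _ _), hCdef, opPQ_col]
    have eA : opPQ A 1 0 = opPQ l (mm - a + 1) a := by rw [hAdef, opPQ_row]
    have hA' : IsPartition (opPQ l (mm - a + 1) a) := isPartition_opPQ l hl hlne _ _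
    have hB' : IsPartition (opPQ m (mm - b) (b + 1)) := isPartition_opPQ m hm hmne _ _
    have hC' : IsPartition (opPQ n (mm - c) (c + 1)) := isPartition_opPQ n hn hnne _ _
    have sA' : (opPQ l (mm - a + 1) a).sum = l.sum + mm + 1 := by
      rw [sum_opPQ l hlne]; omega
    have sB' : (opPQ m (mm - b) (b + 1)).sum = m.sum + mm + 1 := by
      rw [sum_opPQ m hmne]; omega
    have sC' : (opPQ n (mm - c) (c + 1)).sum = n.sum + mm + 1 := by
      rw [sum_opPQ n hnne]; omega
    have h3 := (hconj (opPQ l (mm - a + 1) a) (opPQ m (mm - b) (b + 1))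
      (opPQ n (mm - c) (c + 1)) hA' hB' hC' (by omega) (by omega)).2.2
    constructor
    · show K A B C = K (opPQ l (mm + 1 - a) a) (opPQ m (mm + 1 - (b + 1)) (b + 1))
        (opPQ n (mm + 1 - (c + 1)) (c + 1))
      have e1 : mm + 1 - a = mm - a + 1 := by omega
      have e2 : mm + 1 - (b + 1) = mm - b := by omega
      have e3 : mm + 1 - (c + 1) = mm - c := by omega
      rw [e1, e2, e3, h1, h2, eA, eB, eC, ← h3]
    · simp only [Dom, Set.mem_setOf_eq] at hmem ⊢
      push_cast at hmem ⊢
      omega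
  -- iterated steps
  have repM : ∀ k a b c mm, (a, b, c, mm) ∈ Dom d₁ d₂ d₃ d →
      f (a, b, c, mm) = f (a, b, c, mm + k) ∧ (a, b, c, mm + k) ∈ Dom d₁ d₂ d₃ d := by
    intro k
    induction k with
    | zero => intro a b c mm hmem; exact ⟨rfl, hmem⟩
    | succ k ih =>
      intro a b c mm hmem
      obtain ⟨he, hm2⟩ := ih a b c mm hmem
      obtain ⟨he2, hm3⟩ := stepM a b c (mm + k) hm2
      exact ⟨he.trans he2, hm3⟩
  have rep12 : ∀ p a b c mm, (a, b, c, mm) ∈ Dom d₁ d₂ d₃ d →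
      f (a, b, c, mm) = f (a + p, b + p, c, mm + p) ∧
        (a + p, b + p, c, mm + p) ∈ Dom d₁ d₂ d₃ d := by
    intro p
    induction p with
    | zero => intro a b c mm hmem; exact ⟨rfl, hmem⟩
    | succ p ih =>
      intro a b c mm hmem
      obtain ⟨he, hm2⟩ := ih a b c mm hmem
      obtain ⟨he2, hm3⟩ := step12 (a + p) (b + p) c (mm + p) hm2
      exact ⟨he.trans he2, hm3⟩
  have rep13 : ∀ p a b c mm, (a, b, c, mm) ∈ Dom d₁ d₂ d₃ d →
      f (a, b, c, mm) = f (a + p, b, c + p, mm + p) ∧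
        (a + p, b, c + p, mm + p) ∈ Dom d₁ d₂ d₃ d := by
    intro p
    induction p with
    | zero => intro a b c mm hmem; exact ⟨rfl, hmem⟩
    | succ p ih =>
      intro a b c mm hmem
      obtain ⟨he, hm2⟩ := ih a b c mm hmem
      obtain ⟨he2, hm3⟩ := step13 (a + p) b (c + p) (mm + p) hm2
      exact ⟨he.trans he2, hm3⟩
  have rep23 : ∀ p a b c mm, (a, b, c, mm) ∈ Dom d₁ d₂ d₃ d →
      f (a, b, c, mm) = f (a, b + p, c + p, mm + p) ∧
        (a, b + p, c + p, mm + p) ∈ Dom d₁ d₂ d₃ d := by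
    intro p
    induction p with
    | zero => intro a b c mm hmem; exact ⟨rfl, hmem⟩
    | succ p ih =>
      intro a b c mm hmem
      obtain ⟨he, hm2⟩ := ih a b c mm hmem
      obtain ⟨he2, hm3⟩ := step23 a (b + p) (c + p) (mm + p) hm2
      exact ⟨he.trans he2, hm3⟩
  -- reach a common triple (T,T,T,·)
  have reach : ∀ a b c mm, (a, b, c, mm) ∈ Dom d₁ d₂ d₃ d →
      ∀ T : ℕ, a + b + c ≤ T → (T + a + b + c) % 2 = 0 →
      ∃ M, f (a, b, c, mm) = f (T, T, T, M) ∧ (T, T, T, M) ∈ Dom d₁ d₂ d₃ d := by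
    intro a b c mm hmem T hT hTpar
    set p := (T + c - a - b) / 2 with hp
    set q := (T + b - a - c) / 2 with hq
    set r := (T + a - b - c) / 2 with hr
    have e1 : a + p + q = T := by omega
    have e2 : b + p + r = T := by omega
    have e3 : c + q + r = T := by omega
    obtain ⟨h1, hm1⟩ := rep12 p a b c mm hmem
    obtain ⟨h2, hm2⟩ := rep13 q (a + p) (b + p) c (mm + p) hm1
    obtain ⟨h3, hm3⟩ := rep23 r (a + p + q) (b + p) (c + q) (mm + p + q) hm2
    have etup : ((a + p + q : ℕ), (b + p + r : ℕ), (c + q + r : ℕ), (mm + p + q + r : ℕ))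
        = (T, T, T, mm + p + q + r) := by rw [e1, e2, e3]
    rw [etup] at h3 hm3
    exact ⟨mm + p + q + r, (h1.trans h2).trans h3, hm3⟩
  obtain ⟨a, b, c, mm⟩ := x
  obtain ⟨a', b', c', mm'⟩ := y
  simp only at hpar hx hy ⊢
  show f (a, b, c, mm) = f (a', b', c', mm')
  set T := a + b + c + (a' + b' + c') + (a + b + c) % 2 with hTdef
  have hT1 : a + b + c ≤ T := by omega
  have hT2 : a' + b' + c' ≤ T := by omega
  have hp1 : (T + a + b + c) % 2 = 0 := by omega
  have hp2 : (T + a' + b' + c') % 2 = 0 := by omega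
  obtain ⟨M₁, hM1e, hM1mem⟩ := reach a b c mm hx T hT1 hp1
  obtain ⟨M₂, hM2e, hM2mem⟩ := reach a' b' c' mm' hy T hT2 hp2
  obtain ⟨g1, _⟩ := repM M₂ T T T M₁ hM1mem
  obtain ⟨g2, _⟩ := repM M₁ T T T M₂ hM2mem
  rw [hM1e, hM2e, g1, g2, Nat.add_comm M₁ M₂]
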